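/- Let T be strictly convex and differentiable and D_T the associated Bregman divergence. Suppose a trader with belief parameter θ̂ moves the market state from θ to θ' = λθ̂ + (1-λ)θ for some λ ∈ [0, 1]. Then the trader's expected profit under his belief, E_{x∼p(·;θ̂)}[⟨θ' - θ, φ(x)⟩ - T(θ') + T(θ)], equals D_T(θ, θ̂) - D_T(θ', θ̂) and is at least λ D_T(θ, θ̂) ≥ 0, with strict positivity when λ > 0 and θ ≠ θ̂. -/

import Mathlib

open RealInnerProductSpace MeasureTheory

/-! Taking expectations under `p(·; θ̂)` replaces `φ` by `∇T(θ̂)`, which turns the expected profit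
into `D_T(θ, θ̂) - D_T(θ', θ̂)`. Since `D_T(·, θ̂)` is convex and vanishes at `θ̂`, it is at most
`(1 - λ) D_T(θ, θ̂)` at `θ' = λ θ̂ + (1 - λ) θ`; positivity of `D_T(θ, θ̂)` for `θ ≠ θ̂` is the
gradient inequality of a strictly convex function. -/

section Convex

variable {E : Type*} [NormedAddCommGroup E] [NormedSpace ℝ E] {s : Set E} {f : E → ℝ}
  {f' : StrongDual ℝ E} {x y : E}

theorem ConvexOn.apply_sub_le_of_hasFDerivAt (hf : ConvexOn ℝ s f) (hx : x ∈ s) (hy : y ∈ s)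
    (hf' : HasFDerivAt f f' x) : f' (y - x) ≤ f y - f x := by
  let l : ℝ →ᵃ[ℝ] E := AffineMap.lineMap x y
  have hline : ConvexOn ℝ (l ⁻¹' s) (f ∘ l) := hf.comp_affineMap l
  have hderiv : HasDerivAt (f ∘ l) (f' (y - x)) 0 :=
    HasFDerivAt.comp_hasDerivAt _ (by simpa [l] using hf') AffineMap.hasDerivAt_lineMap
  simpa [slope_def_field, l] using
    hline.le_slope_of_hasDerivAt (by simpa [l] using hx) (by simpa [l] using hy) zero_lt_one hderiv

/-- The strict inequality follows from the non-strict one at the midpoint of `x` and `y`. -/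
theorem StrictConvexOn.apply_sub_lt_of_hasFDerivAt (hf : StrictConvexOn ℝ s f) (hx : x ∈ s)
    (hy : y ∈ s) (hxy : x ≠ y) (hf' : HasFDerivAt f f' x) : f' (y - x) < f y - f x := by
  have hmid : midpoint ℝ x y ∈ s := hf.1.midpoint_mem hx hy
  have hle := hf.convexOn.apply_sub_le_of_hasFDerivAt hx hmid hf'
  have hlt : f (midpoint ℝ x y) < 2⁻¹ * f x + 2⁻¹ * f y := by
    simpa [midpoint_eq_smul_add] using
      hf.2 hx hy hxy (by norm_num : (0 : ℝ) < 2⁻¹) (by norm_num : (0 : ℝ) < 2⁻¹) (by norm_num)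
  have hsub : midpoint ℝ x y - x = (2⁻¹ : ℝ) • (y - x) := by
    rw [midpoint_eq_smul_add, invOf_eq_inv]; module
  rw [hsub, map_smul, smul_eq_mul] at hle
  linarith

end Convex

section Bregman

variable {E : Type*} [NormedAddCommGroup E] [InnerProductSpace ℝ E]

def bregmanDiv (T : E → ℝ) (gradT : E → E) (u v : E) : ℝ :=
  T u - T v - ⟪u - v, gradT v⟫

variable {T : E → ℝ} {gradT : E → E} {s : Set E} {u v w : E}

@[simp]
theorem bregmanDiv_self : bregmanDiv T gradT v v = 0 := by
  simp [bregmanDiv]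

theorem bregmanDiv_sub_bregmanDiv :
    bregmanDiv T gradT u v - bregmanDiv T gradT w v = T u - T w - ⟪u - w, gradT v⟫ := by
  simp only [bregmanDiv, ← sub_sub_sub_cancel_right u w v, inner_sub_left]
  ring

theorem ConvexOn.bregmanDiv (hT : ConvexOn ℝ s T) :
    ConvexOn ℝ s (fun u => bregmanDiv T gradT u v) := by
  refine ⟨hT.1, fun x hx y hy a b ha hb hab => ?_⟩
  have hcomb : a • x + b • y - v = a • (x - v) + b • (y - v) := by
    linear_combination (norm := module) hab • v
  have hTv : a * T v + b * T v = T v := by rw [← add_mul, hab, one_mul]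
  have hTcomb := hT.2 hx hy ha hb hab
  simp only [_root_.bregmanDiv, hcomb, inner_add_left, real_inner_smul_left, smul_eq_mul]
    at hTcomb ⊢
  linarith

theorem bregmanDiv_smul_add_le (hT : ConvexOn ℝ s T) (hu : u ∈ s) (hv : v ∈ s) {lam : ℝ}
    (hlam0 : 0 ≤ lam) (hlam1 : lam ≤ 1) :
    bregmanDiv T gradT (lam • v + (1 - lam) • u) v ≤ (1 - lam) * bregmanDiv T gradT u v := by
  simpa using (hT.bregmanDiv (gradT := gradT) (v := v)).2 hv hu hlam0 (sub_nonneg.2 hlam1)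
    (by ring)

variable [CompleteSpace E]

theorem bregmanDiv_nonneg (hT : ConvexOn ℝ s T) (hu : u ∈ s) (hv : v ∈ s)
    (hgrad : HasGradientAt T (gradT v) v) : 0 ≤ bregmanDiv T gradT u v := by
  have := hT.apply_sub_le_of_hasFDerivAt hv hu hgrad.hasFDerivAt
  rw [InnerProductSpace.toDual_apply_apply, real_inner_comm] at this
  rw [bregmanDiv]; linarith

theorem bregmanDiv_pos (hT : StrictConvexOn ℝ s T) (hu : u ∈ s) (hv : v ∈ s)
    (hgrad : HasGradientAt T (gradT v) v) (huv : u ≠ v) : 0 < bregmanDiv T gradT u v := by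
  have := hT.apply_sub_lt_of_hasFDerivAt hv hu huv.symm hgrad.hasFDerivAt
  rw [InnerProductSpace.toDual_apply_apply, real_inner_comm] at this
  rw [bregmanDiv]; linarith

end Bregman

theorem integral_inner_add_const_mul {X E : Type*} [MeasurableSpace X] {ν : Measure X}
    [NormedAddCommGroup E] [InnerProductSpace ℝ E] [CompleteSpace E] {p : X → ℝ} {φ : X → E}
    (hprob : ∫ x, p x ∂ν = 1) (hint : Integrable (fun x => p x • φ x) ν) (a : E) (c : ℝ) :
    ∫ x, (⟪a, φ x⟫ + c) * p x ∂ν = ⟪a, ∫ x, p x • φ x ∂ν⟫ + c := by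
  have hp : Integrable p ν := .of_integral_ne_zero (by rw [hprob]; exact one_ne_zero)
  have hsplit : ∀ x, (⟪a, φ x⟫ + c) * p x = ⟪a, p x • φ x⟫ + c * p x := fun x => by
    rw [real_inner_smul_right]; ring
  simp only [hsplit]
  rw [integral_add (hint.const_inner a) (hp.const_mul c), integral_inner hint,
    integral_const_mul, hprob, mul_one]

theorem informative_trader_expected_profit_general
    {d : ℕ} {X : Type*} [MeasurableSpace X] (ν : Measure X)
    (φ : X → EuclideanSpace ℝ (Fin d))
    (T : EuclideanSpace ℝ (Fin d) → ℝ)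
    (gradT : EuclideanSpace ℝ (Fin d) → EuclideanSpace ℝ (Fin d))
    (hTconv : StrictConvexOn ℝ Set.univ T)
    (hgrad : ∀ x, HasGradientAt T (gradT x) x)
    (θ θhat : EuclideanSpace ℝ (Fin d))
    (lam : ℝ) (hlam0 : 0 ≤ lam) (hlam1 : lam ≤ 1)
    (p : X → ℝ)
    (hprob : ∫ x, p x ∂ν = 1)
    (hintφ : Integrable (fun x => p x • φ x) ν)
    (hmean : ∫ x, p x • φ x ∂ν = gradT θhat)
    (D : EuclideanSpace ℝ (Fin d) → ℝ)
    (hD : ∀ u, D u = T u - T θhat - ⟪u - θhat, gradT θhat⟫)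
    (θ' : EuclideanSpace ℝ (Fin d)) (hθ' : θ' = lam • θhat + (1 - lam) • θ) :
    (∫ x, (⟪θ' - θ, φ x⟫ - T θ' + T θ) * p x ∂ν) = D θ - D θ'
      ∧ lam * D θ ≤ ∫ x, (⟪θ' - θ, φ x⟫ - T θ' + T θ) * p x ∂ν
      ∧ 0 ≤ lam * D θ
      ∧ (0 < lam → θ ≠ θhat →
          0 < ∫ x, (⟪θ' - θ, φ x⟫ - T θ' + T θ) * p x ∂ν) := by
  obtain rfl : D = fun u => bregmanDiv T gradT u θhat := funext hD
  have hprofit : ∫ x, (⟪θ' - θ, φ x⟫ - T θ' + T θ) * p x ∂ν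
      = bregmanDiv T gradT θ θhat - bregmanDiv T gradT θ' θhat := by
    calc ∫ x, (⟪θ' - θ, φ x⟫ - T θ' + T θ) * p x ∂ν
        = ∫ x, (⟪θ' - θ, φ x⟫ + (T θ - T θ')) * p x ∂ν := by congr 1; ext x; ring
      _ = ⟪θ' - θ, gradT θhat⟫ + (T θ - T θ') := by
        rw [integral_inner_add_const_mul hprob hintφ, hmean]
      _ = _ := by rw [bregmanDiv_sub_bregmanDiv, ← neg_sub θ, inner_neg_left]; ring
  have hcontract : bregmanDiv T gradT θ' θhat ≤ (1 - lam) * bregmanDiv T gradT θ θhat :=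
    hθ' ▸ bregmanDiv_smul_add_le hTconv.convexOn trivial trivial hlam0 hlam1
  have hnonneg : 0 ≤ bregmanDiv T gradT θ θhat :=
    bregmanDiv_nonneg hTconv.convexOn trivial trivial (hgrad θhat)
  refine ⟨hprofit, by rw [hprofit]; linarith, mul_nonneg hlam0 hnonneg, fun hlam hne => ?_⟩
  have hpos := mul_pos hlam (bregmanDiv_pos hTconv trivial trivial (hgrad θhat) hne)
  rw [hprofit]; linarith

/-- Expected profit of an informative budget-limited trader. Let `T` be the
strictly convex differentiable log-partition/cost function with gradient
`∇T`, and let the trader's belief density `p(·;θ̂)` satisfy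
`E_{x∼p(·;θ̂)}[φ x] = ∇T θ̂`. If the trader moves the market state from `θ` to
`θ' = λ θ̂ + (1-λ) θ` with `λ ∈ [0,1]`, then his expected profit equals
`D_T(θ, θ̂) - D_T(θ', θ̂)`, is at least `λ D_T(θ, θ̂) ≥ 0`, and is strictly
positive when `λ > 0` and `θ ≠ θ̂`. -/
theorem informative_trader_expected_profit
    {d : ℕ} {X : Type*} [MeasurableSpace X] (ν : Measure X) [SigmaFinite ν]
    (φ : X → EuclideanSpace ℝ (Fin d))
    (T : EuclideanSpace ℝ (Fin d) → ℝ)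
    (gradT : EuclideanSpace ℝ (Fin d) → EuclideanSpace ℝ (Fin d))
    (hTconv : StrictConvexOn ℝ Set.univ T)
    (hgrad : ∀ x, HasGradientAt T (gradT x) x)
    (θ θhat : EuclideanSpace ℝ (Fin d))
    (lam : ℝ) (hlam0 : 0 ≤ lam) (hlam1 : lam ≤ 1)
    (p : X → ℝ) (hp : ∀ x, p x = Real.exp (⟪θhat, φ x⟫ - T θhat))
    (hprob : ∫ x, p x ∂ν = 1)
    (hintφ : Integrable (fun x => p x • φ x) ν)
    (hmean : ∫ x, p x • φ x ∂ν = gradT θhat)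
    (D : EuclideanSpace ℝ (Fin d) → ℝ)
    (hD : ∀ u, D u = T u - T θhat - ⟪u - θhat, gradT θhat⟫)
    (θ' : EuclideanSpace ℝ (Fin d)) (hθ' : θ' = lam • θhat + (1 - lam) • θ) :
    (∫ x, (⟪θ' - θ, φ x⟫ - T θ' + T θ) * p x ∂ν) = D θ - D θ'
      ∧ lam * D θ ≤ ∫ x, (⟪θ' - θ, φ x⟫ - T θ' + T θ) * p x ∂ν
      ∧ 0 ≤ lam * D θ
      ∧ (0 < lam → θ ≠ θhat →
          0 < ∫ x, (⟪θ' - θ, φ x⟫ - T θ' + T θ) * p x ∂ν) :=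
  informative_trader_expected_profit_general ν φ T gradT hTconv hgrad θ θhat lam hlam0 hlam1 p hprob
    hintφ hmean D hD θ' hθ'
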